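/- For j = l and k = m the product of squared Lagrange polynomials in two variables expands as: δ_{1,j}(z_1)² δ_{2,k}(z_2)² = δ_{1,j}δ_{2,k} − w_1 δ_{2,k} Σ_{l≠j}(σ^{(1)}_{jl}δ_{1,j}+σ^{(1)}_{lj}δ_{1,l}) − w_2 δ_{1,j} Σ_{m≠k}(σ^{(2)}_{km}δ_{2,k}+σ^{(2)}_{mk}δ_{2,m}) + w_1 w_2 Σ_{l≠j,m≠k}(σ^{(1)}_{jl}σ^{(2)}_{km}δ_{1,j}δ_{2,k} + σ^{(1)}_{jl}σ^{(2)}_{mk}δ_{1,j}δ_{2,m} + σ^{(1)}_{lj}σ^{(2)}_{km}δ_{1,l}δ_{2,k} + σ^{(1)}_{lj}σ^{(2)}_{mk}δ_{1,l}δ_{2,m}), where w_i = p_i(z_i). -/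

import Mathlib

open Polynomial Finset

/-- `σ_{jl} = 1/(p'(λ_l)(λ_j - λ_l))` where `p = ∏ (X - λ_i)`. -/
noncomputable def sigma {d : ℕ} (lam : Fin d → ℂ) (j l : Fin d) : ℂ :=
  1 / ((Polynomial.derivative (∏ i, (X - C (lam i)))).eval (lam l) * (lam j - lam l))

/-- Lagrange basis polynomial `δ_j` evaluated at `z`. -/
noncomputable def lagrange {d : ℕ} (lam : Fin d → ℂ) (j : Fin d) (z : ℂ) : ℂ :=
  ∏ l ∈ Finset.univ.erase j, (z - lam l) / (lam j - lam l)

variable {d : ℕ} (lam : Fin d → ℂ)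

lemma lag_eq_basis (l : Fin d) (z : ℂ) :
    lagrange lam l z = eval z (Lagrange.basis Finset.univ lam l) := by
  rw [Lagrange.basis, eval_prod, lagrange]
  refine prod_congr rfl fun i _ => ?_
  simp [Lagrange.basisDivisor, div_eq_inv_mul, mul_comm]

lemma sum_lag (hlam : Function.Injective lam) (j : Fin d) (z : ℂ) :
    ∑ l, lagrange lam l z = 1 := by
  simp_rw [lag_eq_basis]
  rw [← eval_finset_sum, Lagrange.sum_basis hlam.injOn ⟨j, mem_univ j⟩, eval_one]

lemma deriv_eval (l : Fin d) :
    (Polynomial.derivative (∏ i, (X - C (lam i)))).eval (lam l)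
      = ∏ i ∈ Finset.univ.erase l, (lam l - lam i) := by
  have h := Lagrange.eval_nodal_derivative_eval_node_eq (s := Finset.univ) (v := lam)
    (mem_univ l)
  rw [Lagrange.nodal, Lagrange.eval_nodal] at h
  exact h

lemma eval_p (hlam : Function.Injective lam) (l : Fin d) (z : ℂ) :
    (∏ i, (X - C (lam i))).eval z
      = (z - lam l) * (∏ i ∈ Finset.univ.erase l, (lam l - lam i)) * lagrange lam l z := by
  have hd : ∏ i ∈ Finset.univ.erase l, (lam l - lam i) ≠ 0 := by
    refine prod_ne_zero_iff.mpr fun i hi => sub_ne_zero.mpr ?_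
    exact fun h => (mem_erase.mp hi).1 (hlam h.symm)
  rw [lagrange, prod_div_distrib, eval_prod]
  simp_rw [eval_sub, eval_X, eval_C]
  rw [← Finset.mul_prod_erase _ _ (mem_univ l)]
  field_simp

lemma one_var (hlam : Function.Injective lam) (j : Fin d) (z : ℂ) :
    lagrange lam j z ^ 2 =
      lagrange lam j z - (∏ i, (X - C (lam i))).eval z *
        ∑ l ∈ Finset.univ.erase j,
          (sigma lam j l * lagrange lam j z + sigma lam l j * lagrange lam l z) := by
  have key : ∀ l ∈ Finset.univ.erase j,
      (∏ i, (X - C (lam i))).eval z *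
        (sigma lam j l * lagrange lam j z + sigma lam l j * lagrange lam l z)
      = lagrange lam j z * lagrange lam l z := by
    intro l hl
    have hlj : lam j - lam l ≠ 0 := sub_ne_zero.mpr fun h => (mem_erase.mp hl).1 (hlam h.symm)
    have hdl : ∏ i ∈ Finset.univ.erase l, (lam l - lam i) ≠ 0 := by
      refine prod_ne_zero_iff.mpr fun i hi => sub_ne_zero.mpr ?_
      exact fun h => (mem_erase.mp hi).1 (hlam h.symm)
    have hdj : ∏ i ∈ Finset.univ.erase j, (lam j - lam i) ≠ 0 := by
      refine prod_ne_zero_iff.mpr fun i hi => sub_ne_zero.mpr ?_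
      exact fun h => (mem_erase.mp hi).1 (hlam h.symm)
    have hEl := eval_p lam hlam l z
    have hEj := eval_p lam hlam j z
    rw [mul_add]
    nth_rewrite 1 [hEl]
    nth_rewrite 1 [hEj]
    rw [sigma, sigma, deriv_eval, deriv_eval]
    have hjl : lam l - lam j ≠ 0 := fun h => hlj (by linear_combination -h)
    field_simp
    ring
  rw [Finset.mul_sum, sum_congr rfl key, ← Finset.mul_sum]
  have hs : ∑ l ∈ Finset.univ.erase j, lagrange lam l z = 1 - lagrange lam j z := by
    have h := sum_lag lam hlam j z
    rw [← Finset.add_sum_erase _ _ (mem_univ j)] at h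
    linear_combination h
  rw [hs]; ring

theorem stmt12 {d1 d2 : ℕ} (lam : Fin d1 → ℂ) (mu : Fin d2 → ℂ)
    (hlam : Function.Injective lam) (hmu : Function.Injective mu)
    (j : Fin d1) (k : Fin d2) (z1 z2 : ℂ) :
    (lagrange lam j z1) ^ 2 * (lagrange mu k z2) ^ 2 =
      lagrange lam j z1 * lagrange mu k z2 -
      (∏ i, (X - C (lam i))).eval z1 * lagrange mu k z2 *
        (∑ l ∈ Finset.univ.erase j,
          (sigma lam j l * lagrange lam j z1 + sigma lam l j * lagrange lam l z1)) -
      (∏ i, (X - C (mu i))).eval z2 * lagrange lam j z1 *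
        (∑ m ∈ Finset.univ.erase k,
          (sigma mu k m * lagrange mu k z2 + sigma mu m k * lagrange mu m z2)) +
      (∏ i, (X - C (lam i))).eval z1 * (∏ i, (X - C (mu i))).eval z2 *
        ∑ l ∈ Finset.univ.erase j, ∑ m ∈ Finset.univ.erase k,
          (sigma lam j l * sigma mu k m * lagrange lam j z1 * lagrange mu k z2 +
           sigma lam j l * sigma mu m k * lagrange lam j z1 * lagrange mu m z2 +
           sigma lam l j * sigma mu k m * lagrange lam l z1 * lagrange mu k z2 +
           sigma lam l j * sigma mu m k * lagrange lam l z1 * lagrange mu m z2) := by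
  have h1 := one_var lam hlam j z1
  have h2 := one_var mu hmu k z2
  have hD : (∑ l ∈ Finset.univ.erase j, ∑ m ∈ Finset.univ.erase k,
          (sigma lam j l * sigma mu k m * lagrange lam j z1 * lagrange mu k z2 +
           sigma lam j l * sigma mu m k * lagrange lam j z1 * lagrange mu m z2 +
           sigma lam l j * sigma mu k m * lagrange lam l z1 * lagrange mu k z2 +
           sigma lam l j * sigma mu m k * lagrange lam l z1 * lagrange mu m z2)) =
      (∑ l ∈ Finset.univ.erase j,
          (sigma lam j l * lagrange lam j z1 + sigma lam l j * lagrange lam l z1)) *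
      (∑ m ∈ Finset.univ.erase k,
          (sigma mu k m * lagrange mu k z2 + sigma mu m k * lagrange mu m z2)) := by
    rw [Finset.sum_mul_sum]
    exact sum_congr rfl fun l _ => sum_congr rfl fun m _ => by ring
  rw [h1, h2, hD]
  ring
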